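/- Let H be a fixed d × d real symmetric matrix of rank r, and let 1 ≤ l ≤ d. Let S be a random l × d matrix whose entries are i.i.d. standard Gaussian random variables (i.e. S is distributed according to the product of standard Gaussian measures over the l·d entries). Then with probability 1, rank(S H Sᵀ) = min(l, r). -/

import Mathlib

/-!
Let `k = min l r`. Since `rank (S H Sᵀ) ≤ min l r` always, it suffices that the leading `k × k`
minor of `S H Sᵀ` is almost surely nonzero. That minor is a polynomial in the entries of `S`,
and it is not the zero polynomial: choosing the first `k` rows of `S` to be orthonormal
eigenvectors of `H` for nonzero eigenvalues makes the leading block diagonal and invertible.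
Finally, the zero set of a nonzero polynomial is null for any finite product of atomless
measures, by Fubini and induction on the number of variables.
-/

open Matrix MeasureTheory ProbabilityTheory

namespace MvPolynomial

theorem ae_eval_ne_zero_fin : ∀ {n : ℕ} (μ : Fin n → Measure ℝ) [∀ i, SigmaFinite (μ i)]
    [∀ i, NullSingletonClass (μ i)] {p : MvPolynomial (Fin n) ℝ}, p ≠ 0 →
    ∀ᵐ x ∂Measure.pi μ, eval x p ≠ 0
  | 0, μ, _, _, p, hp => by
    obtain ⟨x₀, hx₀⟩ : ∃ x₀, eval x₀ p ≠ 0 := by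
      by_contra! h
      exact hp (funext fun x => by simpa using h x)
    exact ae_of_all _ fun x => Subsingleton.elim x₀ x ▸ hx₀
  | n + 1, μ, _, _, p, hp => by
    set q := finSuccEquiv ℝ n p
    have hq : q ≠ 0 := by simpa [q] using hp
    -- off a null set of `t`, the leading coefficient survives and `y ↦ p (y, t)` has finitely
    -- many roots
    have hlead : ∀ᵐ t ∂Measure.pi (fun j => μ j.succ), eval t q.leadingCoeff ≠ 0 :=
      ae_eval_ne_zero_fin _ (Polynomial.leadingCoeff_ne_zero.mpr hq)
    have hfiber : ∀ᵐ t ∂Measure.pi (fun j => μ j.succ), ∀ᵐ y ∂μ 0,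
        eval (Fin.cons y t) p ≠ 0 := by
      filter_upwards [hlead] with t ht
      have hqt : q.map (eval t) ≠ 0 := fun h => ht (by
        simpa using congrArg (Polynomial.coeff · q.natDegree) h)
      filter_upwards [(Polynomial.finite_setOfPred_isRoot hqt).countable.ae_notMem (μ 0)]
        with y hy
      rwa [eval_eq_eval_mv_eval']
    have hmeas : MeasurableSet
        {z : ℝ × (Fin n → ℝ) | eval (Fin.cons z.1 z.2 : Fin (n + 1) → ℝ) p ≠ 0} := by
      have hcons : Measurable fun z : ℝ × (Fin n → ℝ) =>
          (Fin.cons z.1 z.2 : Fin (n + 1) → ℝ) := by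
        fun_prop
      exact (measurableSet_singleton 0).compl.preimage
        ((continuous_eval p).measurable.comp hcons)
    have hprod :=
      (Measure.ae_prod_iff_ae_ae hmeas).mpr ((Measure.ae_ae_comm hmeas).mpr hfiber)
    filter_upwards [(measurePreserving_piFinSuccAbove μ 0).quasiMeasurePreserving.ae hprod]
      with x hx
    simpa using hx

theorem ae_eval_ne_zero {ι : Type*} [Fintype ι] (μ : ι → Measure ℝ) [∀ i, SigmaFinite (μ i)]
    [∀ i, NullSingletonClass (μ i)] {p : MvPolynomial ι ℝ} (hp : p ≠ 0) :
    ∀ᵐ x ∂Measure.pi μ, eval x p ≠ 0 := by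
  let e := (Fintype.equivFin ι).symm
  have hp' : rename e.symm p ≠ 0 :=
    (map_ne_zero_iff _ (rename_injective _ e.symm.injective)).mpr hp
  filter_upwards [(measurePreserving_piCongrLeft μ e).symm.quasiMeasurePreserving.ae
    (ae_eval_ne_zero_fin (fun i => μ (e i)) hp')] with x hx
  simpa [eval_rename, Function.comp_def, MeasurableEquiv.piCongrLeft,
    Equiv.piCongrLeft_symm_apply] using hx

end MvPolynomial

theorem MeasureTheory.Measure.pi_pi_eq_map_curry {ι κ X : Type*} [Fintype ι] [Fintype κ]
    [MeasurableSpace X] (μ : ι → κ → Measure X) [∀ i j, IsProbabilityMeasure (μ i j)] :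
    (Measure.pi fun i => Measure.pi fun j => μ i j) =
      (Measure.pi fun p : ι × κ => μ p.1 p.2).map (MeasurableEquiv.curry ι κ X) := by
  simp only [← Measure.infinitePi_eq_pi]
  exact (Measure.infinitePi_map_curry μ).symm

namespace Matrix

variable {m n κ : Type*} [Fintype n]

theorem submatrix_mul_mul_transpose {R : Type*} [CommRing R] (S : Matrix m n R)
    (H : Matrix n n R) (e : κ → m) :
    (S * H * Sᵀ).submatrix e e = S.submatrix e id * H * (S.submatrix e id)ᵀ := by
  ext
  simp [mul_apply]

theorem rank_mul_mul_transpose_le {K : Type*} [Field K] [Fintype m] (S : Matrix m n K)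
    (H : Matrix n n K) : (S * H * Sᵀ).rank ≤ min (Fintype.card m) H.rank :=
  le_min (rank_le_card_height _) ((rank_mul_le_left _ _).trans (rank_mul_le_right _ _))

variable [Fintype κ] [DecidableEq κ]

theorem card_le_rank_of_det_submatrix_ne_zero {K : Type*} [Field K] [Fintype m]
    (M : Matrix m m K) (e : κ → m) (h : (M.submatrix e e).det ≠ 0) :
    Fintype.card κ ≤ M.rank :=
  calc Fintype.card κ = (M.submatrix e e).rank :=
        (rank_of_isUnit _ ((isUnit_iff_isUnit_det _).mpr h.isUnit)).symm
    _ ≤ M.rank := rank_submatrix_le M e e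

theorem IsHermitian.exists_det_mul_mul_conjTranspose_ne_zero {𝕜 : Type*} [RCLike 𝕜]
    [DecidableEq n] {A : Matrix n n 𝕜} (hA : A.IsHermitian) (hκ : Fintype.card κ ≤ A.rank) :
    ∃ B : Matrix κ n 𝕜, (B * A * Bᴴ).det ≠ 0 := by
  obtain ⟨g⟩ : Nonempty (κ ↪ {i // hA.eigenvalues i ≠ 0}) :=
    Function.Embedding.nonempty_of_card_le (hA.rank_eq_card_non_zero_eigs ▸ hκ)
  set U : Matrix n n 𝕜 := (hA.eigenvectorUnitary : Matrix n n 𝕜)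
  have hdiag : star U * A * U = diagonal (RCLike.ofReal ∘ hA.eigenvalues) := by
    simpa [Unitary.conjStarAlgAut_apply] using hA.conjStarAlgAut_star_eigenvectorUnitary
  set f : κ → n := Subtype.val ∘ g
  have hf : Function.Injective f := Subtype.val_injective.comp g.injective
  refine ⟨(star U).submatrix f id, ?_⟩
  have hsub : (star U).submatrix f id * A * ((star U).submatrix f id)ᴴ
      = (star U * A * U).submatrix f f := by
    ext
    simp [mul_apply, U, star_eq_conjTranspose]
  rw [hsub, hdiag, submatrix_diagonal _ _ hf, det_diagonal]
  exact Finset.prod_ne_zero_iff.mpr fun i _ => by simpa [f] using (g i).2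

theorem IsSymm.exists_det_submatrix_mul_mul_transpose_ne_zero [DecidableEq n]
    {H : Matrix n n ℝ} (hH : H.IsSymm) {e : κ → m} (he : Function.Injective e)
    (hκ : Fintype.card κ ≤ H.rank) :
    ∃ S : Matrix m n ℝ, ((S * H * Sᵀ).submatrix e e).det ≠ 0 := by
  obtain ⟨B, hB⟩ :=
    (isHermitian_iff_isSymm.mpr hH).exists_det_mul_mul_conjTranspose_ne_zero hκ
  let S : Matrix m n ℝ := Function.extend e B 0
  have hS : S.submatrix e id = B := Function.extend_comp he B 0
  exact ⟨S, by rwa [submatrix_mul_mul_transpose, hS, ← conjTranspose_eq_transpose_of_trivial]⟩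

variable {R : Type*} [CommRing R]

noncomputable def sketchedMinor (H : Matrix n n R) (e : κ → m) : MvPolynomial (m × n) R :=
  let X : Matrix m n (MvPolynomial (m × n) R) := Matrix.of fun i j => MvPolynomial.X (i, j)
  ((X * H.map (MvPolynomial.C : R →+* MvPolynomial (m × n) R) * Xᵀ).submatrix e e).det

theorem eval_sketchedMinor (H : Matrix n n R) (e : κ → m) (x : m × n → R) :
    MvPolynomial.eval x (sketchedMinor H e) =
      ((of (Function.curry x) * H * (of (Function.curry x))ᵀ).submatrix e e).det := by
  rw [sketchedMinor, RingHom.map_det, RingHom.mapMatrix_apply, ← submatrix_map, Matrix.map_mul,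
    Matrix.map_mul]
  congr 4 <;> ext <;> simp

end Matrix

theorem rank_sketched_hessian_ae_general {d : ℕ} (H : Matrix (Fin d) (Fin d) ℝ)
    (hsymm : H.IsSymm) (r : ℕ) (hr : H.rank = r)
    (l : ℕ) :
    (Measure.pi fun _ : Fin l => Measure.pi fun _ : Fin d => gaussianReal 0 1)
      {S : Fin l → Fin d → ℝ | (Matrix.of S * H * (Matrix.of S)ᵀ).rank = min l r} = 1 := by
  subst hr
  let e := Fin.castLE (min_le_left l H.rank)
  obtain ⟨S₀, hS₀⟩ := hsymm.exists_det_submatrix_mul_mul_transpose_ne_zero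
    (Fin.castLE_injective (min_le_left l H.rank)) (by simp)
  have hq : sketchedMinor H e ≠ 0 := fun h => hS₀ <| by
    have h₀ := congrArg (MvPolynomial.eval fun p => S₀ p.1 p.2) h
    rwa [eval_sketchedMinor, map_zero] at h₀
  have : NullSingletonClass (gaussianReal 0 1) := nullSingletonClass_gaussianReal one_ne_zero
  rw [Measure.pi_pi_eq_map_curry, MeasurableEquiv.map_apply,
    measure_congr (ae_eq_univ.mpr ?_), measure_univ]
  filter_upwards [MvPolynomial.ae_eval_ne_zero _ hq] with x hx
  rw [eval_sketchedMinor] at hx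
  rw [Set.mem_preimage, MeasurableEquiv.coe_curry]
  refine le_antisymm (by simpa using rank_mul_mul_transpose_le (of (Function.curry x)) H) ?_
  simpa using card_le_rank_of_det_submatrix_ne_zero _ e hx

/-- Let `H` be a fixed `d × d` real symmetric matrix of rank `r` and `1 ≤ l ≤ d`.
If `S` is a random `l × d` matrix with i.i.d. standard Gaussian entries (law given by
the product over all entries of the standard Gaussian measure on `ℝ`), then with
probability 1, `rank (S * H * Sᵀ) = min l r`. -/
theorem rank_sketched_hessian_ae {d : ℕ} (H : Matrix (Fin d) (Fin d) ℝ)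
    (hsymm : H.IsSymm) (r : ℕ) (hr : H.rank = r)
    (l : ℕ) (hl : 1 ≤ l) (hld : l ≤ d) :
    (Measure.pi fun _ : Fin l => Measure.pi fun _ : Fin d => gaussianReal 0 1)
      {S : Fin l → Fin d → ℝ | (Matrix.of S * H * (Matrix.of S)ᵀ).rank = min l r} = 1 :=
  rank_sketched_hessian_ae_general H hsymm r hr l
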